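/- arXiv:2312.11456 — 7 statements merged into one kernel-verified Lean document; each statement's English description precedes it below -/
import Mathlib

section
/- Suboptimality decomposition against a Gibbs policy: if π̂ is the Gibbs policy of a reward r̂ : X×A → ℝ, then for any policy π with supp(π(·|x)) ⊆ supp(π0(·|x)) for all x, J(π) − J(π̂) = E_{x∼d0}[ E_{a∼π(·|x)}[r*(x,a) − r̂(x,a)] + E_{a∼π̂(·|x)}[r̂(x,a) − r*(x,a)] ] − η·E_{x∼d0} KL(π(·|x)‖π̂(·|x)), where J is the value under the true reward r*. -/
open Finset

/-- KL divergence between two distributions on a finite set. -/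
noncomputable def KL {A : Type*} [Fintype A] (p q : A → ℝ) : ℝ :=
  ∑ a, p a * Real.log (p a / q a)

/-- KL-regularized value of a policy. -/
noncomputable def J {X A : Type*} [Fintype X] [Fintype A]
    (d0 : X → ℝ) (pi0 : X → A → ℝ) (η : ℝ) (rstar : X → A → ℝ)
    (p : X → A → ℝ) : ℝ :=
  ∑ x, d0 x * ((∑ a, p x a * rstar x a) - η * KL (p x) (pi0 x))

lemma key_pointwise {A : Type*} [Fintype A] (η : ℝ) (hη : 0 < η)
    (pi0 : A → ℝ) (hpi0 : ∀ a, 0 < pi0 a)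
    (rstar rhat phat p : A → ℝ)
    (hg : ∀ a, phat a =
      pi0 a * Real.exp (rhat a / η) / ∑ b, pi0 b * Real.exp (rhat b / η))
    (hp : ∀ a, 0 ≤ p a) (hpsum : ∑ a, p a = 1) :
    ((∑ a, p a * rstar a) - η * KL p pi0)
      - ((∑ a, phat a * rstar a) - η * KL phat pi0)
    = (∑ a, p a * (rstar a - rhat a)) + (∑ a, phat a * (rhat a - rstar a))
      - η * KL p phat := by
  set Z : ℝ := ∑ b, pi0 b * Real.exp (rhat b / η) with hZdef
  have hne : (Finset.univ : Finset A).Nonempty := by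
    rcases (Finset.univ : Finset A).eq_empty_or_nonempty with h | h
    · rw [h] at hpsum; simp at hpsum
    · exact h
  have hZ : 0 < Z := Finset.sum_pos (fun b _ => mul_pos (hpi0 b) (Real.exp_pos _)) hne
  have hphatpos : ∀ a, 0 < phat a := fun a =>
    hg a ▸ div_pos (mul_pos (hpi0 a) (Real.exp_pos _)) hZ
  have hphatsum : ∑ a, phat a = 1 := by
    simp only [hg]
    rw [← Finset.sum_div, ← hZdef, div_self (ne_of_gt hZ)]
  have hK2 : KL phat pi0 = (∑ a, phat a * rhat a) / η - Real.log Z := by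
    unfold KL
    have step : ∀ a, phat a * Real.log (phat a / pi0 a)
        = phat a * rhat a / η - phat a * Real.log Z := by
      intro a
      have h1 : phat a / pi0 a = Real.exp (rhat a / η) / Z := by
        rw [hg]; field_simp [hZ.ne', (hpi0 a).ne']
      rw [h1, Real.log_div (Real.exp_ne_zero _) (ne_of_gt hZ), Real.log_exp]
      ring
    rw [Finset.sum_congr rfl (fun a _ => step a), Finset.sum_sub_distrib,
      ← Finset.sum_mul, hphatsum, ← Finset.sum_div]
    ring
  have hK3 : KL p phat = KL p pi0 + Real.log Z - (∑ a, p a * rhat a) / η := by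
    unfold KL
    have step : ∀ a, p a * Real.log (p a / phat a)
        = p a * Real.log (p a / pi0 a) + p a * Real.log Z - p a * rhat a / η := by
      intro a
      rcases eq_or_ne (p a) 0 with h | h
      · simp [h]
      · have hpa : 0 < p a := lt_of_le_of_ne (hp a) (Ne.symm h)
        have h1 : p a / phat a = (p a / pi0 a) * (Z / Real.exp (rhat a / η)) := by
          rw [hg]; field_simp [hZ.ne', (hpi0 a).ne']
        rw [h1, Real.log_mul (div_pos hpa (hpi0 a)).ne' (div_pos hZ (Real.exp_pos _)).ne',
          Real.log_div (ne_of_gt hZ) (Real.exp_ne_zero _), Real.log_exp]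
        ring
    rw [Finset.sum_congr rfl (fun a _ => step a), Finset.sum_sub_distrib,
      Finset.sum_add_distrib, ← Finset.sum_mul, hpsum, ← Finset.sum_div]
    ring
  simp only [mul_sub, Finset.sum_sub_distrib]
  rw [hK2, hK3]
  field_simp
  ring

theorem suboptimality_decomposition_gibbs
    {X A : Type*} [Fintype X] [Fintype A]
    (d0 : X → ℝ) (hd0 : ∀ x, 0 ≤ d0 x) (hd0sum : ∑ x, d0 x = 1)
    (η : ℝ) (hη : 0 < η)
    (pi0 : X → A → ℝ) (hpi0pos : ∀ x a, 0 < pi0 x a) (hpi0sum : ∀ x, ∑ a, pi0 x a = 1)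
    (rstar rhat : X → A → ℝ)
    (phat : X → A → ℝ)
    (hgibbs : ∀ x a, phat x a =
      pi0 x a * Real.exp (rhat x a / η) / ∑ b, pi0 x b * Real.exp (rhat x b / η))
    (p : X → A → ℝ)
    (hp : ∀ x a, 0 ≤ p x a) (hpsum : ∀ x, ∑ a, p x a = 1)
    (hsupp : ∀ x a, p x a ≠ 0 → pi0 x a ≠ 0) :
    J d0 pi0 η rstar p - J d0 pi0 η rstar phat =
      (∑ x, d0 x * ((∑ a, p x a * (rstar x a - rhat x a))
          + (∑ a, phat x a * (rhat x a - rstar x a))))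
        - η * ∑ x, d0 x * KL (p x) (phat x) := by
  rw [J, J, ← Finset.sum_sub_distrib, Finset.mul_sum, ← Finset.sum_sub_distrib]
  refine Finset.sum_congr rfl fun x _ => ?_
  have h := key_pointwise η hη (pi0 x) (hpi0pos x) (rstar x) (rhat x) (phat x)
    (p x) (hgibbs x) (hp x) (hpsum x)
  rw [← mul_sub, h]
  ring
end

section
/- Offline pessimism with expected uncertainty (Theorem 3.1, Option I, deterministic form): suppose the true reward is linear, r*(x,a) = ⟨θ*, φ(x,a)⟩, let θ̂ ∈ ℝ^d and a symmetric positive definite Σ ∈ ℝ^{d×d} satisfy ‖θ̂ − θ*‖_Σ ≤ β for some β ≥ 0, let ν ∈ ℝ^d, let Π be a set of policies each satisfying supp(π(·|x)) ⊆ supp(π0(·|x)), and suppose π̂ ∈ Π maximizes over π ∈ Π the objective ⟨θ̂, E_{x∼d0} φ(x,π)⟩ − β·‖E_{x∼d0} φ(x,π) − ν‖_{Σ^{-1}} − η·E_{x∼d0} KL(π(·|x)‖π0(·|x)). Then for every π ∈ Π, J(π) − J(π̂) ≤ 2β·‖E_{x∼d0} φ(x,π) − ν‖_{Σ^{-1}}.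 -/
open Finset Matrix

/-- The matrix-weighted norm ‖v‖_M = √(vᵀ M v). -/
noncomputable def matNorm {d : ℕ} (M : Matrix (Fin d) (Fin d) ℝ) (v : Fin d → ℝ) : ℝ :=
  Real.sqrt (v ⬝ᵥ M.mulVec v)

/-- Expected feature vector E_{x∼d0, a∼p(·|x)} φ(x,a). -/
noncomputable def featMean {X A : Type*} [Fintype X] [Fintype A] {d : ℕ}
    (d0 : X → ℝ) (φ : X → A → Fin d → ℝ) (p : X → A → ℝ) : Fin d → ℝ :=
  ∑ x, d0 x • ∑ a, p x a • φ x a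

/-! With a linear reward, `J π = ⟨θ*, μ_π⟩ − η·E KL(π‖π0)` where `μ_π = featMean d0 φ π`.
Subtracting the optimality inequality of `π̂` from `J π − J π̂` leaves
`⟨θ* − θ̂, μ_π − ν⟩ + ⟨θ̂ − θ*, μ_π̂ − ν⟩ + β‖μ_π − ν‖_{Σ⁻¹} − β‖μ_π̂ − ν‖_{Σ⁻¹}`.
By Cauchy–Schwarz for the dual pair `‖·‖_Σ`, `‖·‖_{Σ⁻¹}` each inner product is at most `β` times
the corresponding `Σ⁻¹`-norm, so the `π̂` terms cancel and `2β‖μ_π − ν‖_{Σ⁻¹}` remains. -/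

lemma dotProduct_mulVec_sq_le {n : Type*} [Fintype n] {M : Matrix n n ℝ} (hM : M.PosSemidef)
    (u w : n → ℝ) : (u ⬝ᵥ M *ᵥ w) ^ 2 ≤ (u ⬝ᵥ M *ᵥ u) * (w ⬝ᵥ M *ᵥ w) := by
  let := M.toSeminormedAddCommGroup hM
  let := M.toInnerProductSpace hM
  have hcs := real_inner_mul_inner_self_le u w
  -- here `⟪x, y⟫ = (M *ᵥ y) ⬝ᵥ star x`, and `star = id` on `ℝ`
  change ((M *ᵥ w) ⬝ᵥ u) * ((M *ᵥ w) ⬝ᵥ u) ≤ ((M *ᵥ u) ⬝ᵥ u) * ((M *ᵥ w) ⬝ᵥ w) at hcs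
  rw [dotProduct_comm (M *ᵥ w) u, dotProduct_comm (M *ᵥ u), dotProduct_comm (M *ᵥ w) w] at hcs
  linarith

lemma abs_dotProduct_le_matNorm_mul_matNorm_inv {d : ℕ} {M : Matrix (Fin d) (Fin d) ℝ}
    (hM : M.PosDef) (u v : Fin d → ℝ) :
    |u ⬝ᵥ v| ≤ matNorm M u * matNorm M⁻¹ v := by
  have : Invertible M := hM.isUnit.invertible
  set w := M⁻¹ *ᵥ v
  have hMw : M *ᵥ w = v := by simp [w, mulVec_mulVec]
  have hww : w ⬝ᵥ M *ᵥ w = v ⬝ᵥ M⁻¹ *ᵥ v := by rw [hMw, dotProduct_comm]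
  have hu : 0 ≤ u ⬝ᵥ M *ᵥ u := hM.posSemidef.dotProduct_mulVec_nonneg u
  calc |u ⬝ᵥ v| = |u ⬝ᵥ M *ᵥ w| := by rw [hMw]
    _ ≤ √((u ⬝ᵥ M *ᵥ u) * (w ⬝ᵥ M *ᵥ w)) :=
      Real.abs_le_sqrt (dotProduct_mulVec_sq_le hM.posSemidef u w)
    _ = matNorm M u * matNorm M⁻¹ v := by rw [Real.sqrt_mul hu, hww, matNorm, matNorm]

lemma J_linear_reward_eq {X A : Type*} [Fintype X] [Fintype A] {d : ℕ}
    (d0 : X → ℝ) (pi0 : X → A → ℝ) (η : ℝ) (θ : Fin d → ℝ)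
    (φ : X → A → Fin d → ℝ) (p : X → A → ℝ) :
    J d0 pi0 η (fun x a => θ ⬝ᵥ φ x a) p
      = θ ⬝ᵥ featMean d0 φ p - η * ∑ x, d0 x * KL (p x) (pi0 x) := by
  have hreward : θ ⬝ᵥ featMean d0 φ p = ∑ x, d0 x * ∑ a, p x a * (θ ⬝ᵥ φ x a) := by
    simp only [featMean, dotProduct_sum, dotProduct_smul, smul_eq_mul]
  rw [hreward, _root_.J, mul_sum, ← sum_sub_distrib]
  simp only [mul_sub, mul_left_comm η]

theorem offline_pessimism_optionI_general
    {X A : Type*} [Fintype X] [Fintype A] {d : ℕ}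
    (d0 : X → ℝ)
    (η : ℝ)
    (pi0 : X → A → ℝ)
    (φ : X → A → Fin d → ℝ)
    (θstar θhat : Fin d → ℝ)
    (Sig : Matrix (Fin d) (Fin d) ℝ) (hSig : Sig.PosDef)
    (β : ℝ)
    (hest : matNorm Sig (θhat - θstar) ≤ β)
    (ν : Fin d → ℝ)
    (Pol : Set (X → A → ℝ))
    (phat : X → A → ℝ)
    (hmax : ∀ p ∈ Pol,
      (θhat ⬝ᵥ featMean d0 φ p) - β * matNorm Sig⁻¹ (featMean d0 φ p - ν)
          - η * ∑ x, d0 x * KL (p x) (pi0 x)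
        ≤ (θhat ⬝ᵥ featMean d0 φ phat) - β * matNorm Sig⁻¹ (featMean d0 φ phat - ν)
          - η * ∑ x, d0 x * KL (phat x) (pi0 x)) :
    ∀ p ∈ Pol,
      J d0 pi0 η (fun x a => θstar ⬝ᵥ φ x a) p
          - J d0 pi0 η (fun x a => θstar ⬝ᵥ φ x a) phat
        ≤ 2 * β * matNorm Sig⁻¹ (featMean d0 φ p - ν) := by
  intro p hp
  have estimation_error : ∀ q, |(θhat - θstar) ⬝ᵥ (featMean d0 φ q - ν)|
      ≤ β * matNorm Sig⁻¹ (featMean d0 φ q - ν) := fun q =>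
    (abs_dotProduct_le_matNorm_mul_matNorm_inv hSig _ _).trans
      (mul_le_mul_of_nonneg_right hest (Real.sqrt_nonneg _))
  obtain ⟨hp_ge, -⟩ := abs_le.mp (estimation_error p)
  obtain ⟨-, hphat_le⟩ := abs_le.mp (estimation_error phat)
  simp only [dotProduct_sub, sub_dotProduct] at hp_ge hphat_le
  rw [J_linear_reward_eq, J_linear_reward_eq]
  linarith [hmax p hp]

theorem offline_pessimism_optionI
    {X A : Type*} [Fintype X] [Fintype A] {d : ℕ}
    (d0 : X → ℝ) (hd0 : ∀ x, 0 ≤ d0 x) (hd0sum : ∑ x, d0 x = 1)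
    (η : ℝ) (hη : 0 < η)
    (pi0 : X → A → ℝ) (hpi0pos : ∀ x a, 0 < pi0 x a) (hpi0sum : ∀ x, ∑ a, pi0 x a = 1)
    (φ : X → A → Fin d → ℝ)
    (θstar θhat : Fin d → ℝ)
    (Sig : Matrix (Fin d) (Fin d) ℝ) (hSig : Sig.PosDef)
    (β : ℝ) (hβ : 0 ≤ β)
    (hest : matNorm Sig (θhat - θstar) ≤ β)
    (ν : Fin d → ℝ)
    (Pol : Set (X → A → ℝ))
    (hPol : ∀ p ∈ Pol, (∀ x a, 0 ≤ p x a) ∧ (∀ x, ∑ a, p x a = 1)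
      ∧ (∀ x a, p x a ≠ 0 → pi0 x a ≠ 0))
    (phat : X → A → ℝ) (hphatmem : phat ∈ Pol)
    (hmax : ∀ p ∈ Pol,
      (θhat ⬝ᵥ featMean d0 φ p) - β * matNorm Sig⁻¹ (featMean d0 φ p - ν)
          - η * ∑ x, d0 x * KL (p x) (pi0 x)
        ≤ (θhat ⬝ᵥ featMean d0 φ phat) - β * matNorm Sig⁻¹ (featMean d0 φ phat - ν)
          - η * ∑ x, d0 x * KL (phat x) (pi0 x)) :
    ∀ p ∈ Pol,
      J d0 pi0 η (fun x a => θstar ⬝ᵥ φ x a) p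
          - J d0 pi0 η (fun x a => θstar ⬝ᵥ φ x a) phat
        ≤ 2 * β * matNorm Sig⁻¹ (featMean d0 φ p - ν) :=
  offline_pessimism_optionI_general d0 η pi0 φ θstar θhat Sig hSig β hest ν Pol phat hmax
end

section
/- Robust policy improvement of pessimistic offline learning: under the hypotheses of the Option I offline pessimism theorem (r*(x,a) = ⟨θ*, φ(x,a)⟩, ‖θ̂ − θ*‖_Σ ≤ β, and π̂ ∈ Π maximizes ⟨θ̂, E_{x∼d0} φ(x,π)⟩ − β·‖E_{x∼d0} φ(x,π) − ν‖_{Σ^{-1}} − η·E_{x∼d0} KL(π(·|x)‖π0(·|x)) over Π), if moreover a reference policy π_ref belongs to Π and ν = E_{x∼d0} φ(x,π_ref), then J(π̂) ≥ J(π_ref). -/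
open Finset Matrix

/-! The pessimistic objective evaluated at `π_ref` has zero penalty, so it equals `J(π_ref)` up to
the estimation error `⟨θ̂ - θ*, ν⟩`. At any other policy the penalty `β ‖φ(π) - ν‖_{Σ⁻¹}`
dominates the remaining error `⟨θ̂ - θ*, φ(π) - ν⟩` by Cauchy–Schwarz in the dual pair
`‖·‖_Σ`, `‖·‖_{Σ⁻¹}`, so the objective underestimates `J(π)` up to the same shift. Maximality
of `π̂` then gives `J(π_ref) ≤ J(π̂)`. -/

section MatNorm

variable {d : ℕ} {M : Matrix (Fin d) (Fin d) ℝ}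

theorem dotProduct_mulVec_le_matNorm_mul_matNorm (hM : M.PosSemidef) (w y : Fin d → ℝ) :
    w ⬝ᵥ M *ᵥ y ≤ matNorm M w * matNorm M y := by
  have := @real_inner_le_norm _ (M.toSeminormedAddCommGroup hM) (M.toInnerProductSpace hM) w y
  rw [dotProduct_comm, matNorm, matNorm, dotProduct_comm w, dotProduct_comm y]
  exact this

theorem dotProduct_le_matNorm_mul_matNorm_inv (hM : M.PosDef) (w z : Fin d → ℝ) :
    w ⬝ᵥ z ≤ matNorm M w * matNorm M⁻¹ z := by
  have hz : M *ᵥ (M⁻¹ *ᵥ z) = z := by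
    rw [mulVec_mulVec, mul_nonsing_inv _ hM.det_pos.ne'.isUnit, one_mulVec]
  calc w ⬝ᵥ z = w ⬝ᵥ M *ᵥ (M⁻¹ *ᵥ z) := by rw [hz]
    _ ≤ matNorm M w * matNorm M (M⁻¹ *ᵥ z) :=
      dotProduct_mulVec_le_matNorm_mul_matNorm hM.posSemidef w _
    _ = matNorm M w * matNorm M⁻¹ z := by
      rw [matNorm, matNorm, matNorm, hz, dotProduct_comm (M⁻¹ *ᵥ z)]

theorem matNorm_zero (M : Matrix (Fin d) (Fin d) ℝ) : matNorm M 0 = 0 := by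
  simp [matNorm]

theorem dotProduct_sub_mul_matNorm_inv_le {θ θhat : Fin d → ℝ} {β : ℝ} (hM : M.PosDef)
    (hest : matNorm M (θhat - θ) ≤ β) (v ν : Fin d → ℝ) :
    θhat ⬝ᵥ v - β * matNorm M⁻¹ (v - ν) ≤ θ ⬝ᵥ v + (θhat - θ) ⬝ᵥ ν :=
  calc θhat ⬝ᵥ v - β * matNorm M⁻¹ (v - ν)
      ≤ θhat ⬝ᵥ v - matNorm M (θhat - θ) * matNorm M⁻¹ (v - ν) := by
        gcongr
        exact Real.sqrt_nonneg _
    _ ≤ θhat ⬝ᵥ v - (θhat - θ) ⬝ᵥ (v - ν) := by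
        gcongr
        exact dotProduct_le_matNorm_mul_matNorm_inv hM _ _
    _ = θ ⬝ᵥ v + (θhat - θ) ⬝ᵥ ν := by
        simp only [sub_dotProduct, dotProduct_sub]
        ring

end MatNorm

theorem J_dotProduct_reward {X A : Type*} [Fintype X] [Fintype A] {d : ℕ}
    (d0 : X → ℝ) (pi0 : X → A → ℝ) (η : ℝ) (φ : X → A → Fin d → ℝ)
    (θ : Fin d → ℝ) (p : X → A → ℝ) :
    J d0 pi0 η (fun x a => θ ⬝ᵥ φ x a) p
      = θ ⬝ᵥ featMean d0 φ p - η * ∑ x, d0 x * KL (p x) (pi0 x) := by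
  simp only [_root_.J, featMean, dotProduct_sum, dotProduct_smul, smul_eq_mul, mul_sub, mul_sum,
    ← sum_sub_distrib, mul_left_comm η]

theorem robust_policy_improvement_general
    {X A : Type*} [Fintype X] [Fintype A] {d : ℕ}
    (d0 : X → ℝ)
    (η : ℝ)
    (pi0 : X → A → ℝ)
    (φ : X → A → Fin d → ℝ)
    (θstar θhat : Fin d → ℝ)
    (Sig : Matrix (Fin d) (Fin d) ℝ) (hSig : Sig.PosDef)
    (β : ℝ)
    (hest : matNorm Sig (θhat - θstar) ≤ β)
    (ν : Fin d → ℝ)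
    (Pol : Set (X → A → ℝ))
    (phat : X → A → ℝ)
    (hmax : ∀ p ∈ Pol,
      (θhat ⬝ᵥ featMean d0 φ p) - β * matNorm Sig⁻¹ (featMean d0 φ p - ν)
          - η * ∑ x, d0 x * KL (p x) (pi0 x)
        ≤ (θhat ⬝ᵥ featMean d0 φ phat) - β * matNorm Sig⁻¹ (featMean d0 φ phat - ν)
          - η * ∑ x, d0 x * KL (phat x) (pi0 x))
    (pref : X → A → ℝ) (hprefmem : pref ∈ Pol)
    (hν : ν = featMean d0 φ pref) :
    J d0 pi0 η (fun x a => θstar ⬝ᵥ φ x a) pref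
      ≤ J d0 pi0 η (fun x a => θstar ⬝ᵥ φ x a) phat := by
  have href := hmax pref hprefmem
  rw [← hν, sub_self, matNorm_zero, mul_zero, sub_zero] at href
  have hphat := dotProduct_sub_mul_matNorm_inv_le hSig hest (featMean d0 φ phat) ν
  rw [J_dotProduct_reward, J_dotProduct_reward, ← hν]
  linarith [sub_dotProduct θhat θstar ν]

theorem robust_policy_improvement
    {X A : Type*} [Fintype X] [Fintype A] {d : ℕ}
    (d0 : X → ℝ) (hd0 : ∀ x, 0 ≤ d0 x) (hd0sum : ∑ x, d0 x = 1)
    (η : ℝ) (hη : 0 < η)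
    (pi0 : X → A → ℝ) (hpi0pos : ∀ x a, 0 < pi0 x a) (hpi0sum : ∀ x, ∑ a, pi0 x a = 1)
    (φ : X → A → Fin d → ℝ)
    (θstar θhat : Fin d → ℝ)
    (Sig : Matrix (Fin d) (Fin d) ℝ) (hSig : Sig.PosDef)
    (β : ℝ) (hβ : 0 ≤ β)
    (hest : matNorm Sig (θhat - θstar) ≤ β)
    (ν : Fin d → ℝ)
    (Pol : Set (X → A → ℝ))
    (hPol : ∀ p ∈ Pol, (∀ x a, 0 ≤ p x a) ∧ (∀ x, ∑ a, p x a = 1)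
      ∧ (∀ x a, p x a ≠ 0 → pi0 x a ≠ 0))
    (phat : X → A → ℝ) (hphatmem : phat ∈ Pol)
    (hmax : ∀ p ∈ Pol,
      (θhat ⬝ᵥ featMean d0 φ p) - β * matNorm Sig⁻¹ (featMean d0 φ p - ν)
          - η * ∑ x, d0 x * KL (p x) (pi0 x)
        ≤ (θhat ⬝ᵥ featMean d0 φ phat) - β * matNorm Sig⁻¹ (featMean d0 φ phat - ν)
          - η * ∑ x, d0 x * KL (phat x) (pi0 x))
    (pref : X → A → ℝ) (hprefmem : pref ∈ Pol)
    (hν : ν = featMean d0 φ pref) :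
    J d0 pi0 η (fun x a => θstar ⬝ᵥ φ x a) pref
      ≤ J d0 pi0 η (fun x a => θstar ⬝ᵥ φ x a) phat :=
  robust_policy_improvement_general d0 η pi0 φ θstar θhat Sig hSig β hest ν Pol phat hmax pref
    hprefmem hν
end

section
/- KL divergence between Gibbs policies is controlled by a parameter-feature inner product: for θ, θ' ∈ ℝ^d let π_θ and π_{θ'} denote the Gibbs policies of the linear rewards r_θ(x,a) = ⟨θ, φ(x,a)⟩ and r_{θ'}(x,a) = ⟨θ', φ(x,a)⟩ respectively. Then for every x ∈ X, η·KL(π_θ(·|x)‖π_{θ'}(·|x)) ≤ ⟨θ − θ', φ(x,π_θ) − φ(x,π_{θ'})⟩, where φ(x,π) = E_{a∼π(·|x)} φ(x,a). -/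
open Finset Matrix

/-- Pointwise Gibbs: `p - q ≤ p * log (p / q)` for positive `p, q`. -/
lemma sub_le_mul_log {p q : ℝ} (hp : 0 < p) (hq : 0 < q) :
    p - q ≤ p * Real.log (p / q) := by
  have h := Real.log_le_sub_one_of_pos (show 0 < q / p from div_pos hq hp)
  have hlog : Real.log (q / p) = - Real.log (p / q) := by
    rw [← Real.log_inv, inv_div]
  rw [hlog] at h
  have h2 := mul_le_mul_of_nonneg_left h hp.le
  have h3 : p * (q / p - 1) = q - p := by field_simp
  rw [mul_neg, h3] at h2
  linarith

/-- Nonnegativity of KL for positive distributions with equal total mass. -/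
lemma KL_nonneg {A : Type*} [Fintype A] {p q : A → ℝ}
    (hp : ∀ a, 0 < p a) (hq : ∀ a, 0 < q a)
    (hsum : ∑ a, p a = ∑ a, q a) : 0 ≤ KL p q := by
  have h : ∑ a, (p a - q a) ≤ ∑ a, p a * Real.log (p a / q a) :=
    Finset.sum_le_sum fun a _ => sub_le_mul_log (hp a) (hq a)
  rw [Finset.sum_sub_distrib, hsum, sub_self] at h
  simpa [KL] using h

theorem gibbs_kl_inner_product_bound
    {X A : Type*} [Fintype X] [Fintype A] {d : ℕ}
    (η : ℝ) (hη : 0 < η)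
    (pi0 : X → A → ℝ) (hpi0pos : ∀ x a, 0 < pi0 x a) (hpi0sum : ∀ x, ∑ a, pi0 x a = 1)
    (φ : X → A → Fin d → ℝ)
    (θ θ' : Fin d → ℝ)
    (pθ pθ' : X → A → ℝ)
    (hpθ : ∀ x a, pθ x a =
      pi0 x a * Real.exp ((θ ⬝ᵥ φ x a) / η) / ∑ b, pi0 x b * Real.exp ((θ ⬝ᵥ φ x b) / η))
    (hpθ' : ∀ x a, pθ' x a =
      pi0 x a * Real.exp ((θ' ⬝ᵥ φ x a) / η) / ∑ b, pi0 x b * Real.exp ((θ' ⬝ᵥ φ x b) / η)) :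
    ∀ x, η * KL (pθ x) (pθ' x)
      ≤ (θ - θ') ⬝ᵥ ((∑ a, pθ x a • φ x a) - (∑ a, pθ' x a • φ x a)) := by
  intro x
  haveI : Nonempty A := by
    by_contra h
    rw [not_nonempty_iff] at h
    have h1 := hpi0sum x
    rw [Finset.univ_eq_empty, Finset.sum_empty] at h1
    exact one_ne_zero h1.symm
  set f : A → ℝ := fun a => θ ⬝ᵥ φ x a with hf
  set g : A → ℝ := fun a => θ' ⬝ᵥ φ x a with hg
  have hfa : ∀ a, θ ⬝ᵥ φ x a = f a := fun a => rfl
  have hga : ∀ a, θ' ⬝ᵥ φ x a = g a := fun a => rfl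
  set Z : ℝ := ∑ b, pi0 x b * Real.exp (f b / η) with hZ
  set Z' : ℝ := ∑ b, pi0 x b * Real.exp (g b / η) with hZ'
  have hZpos : 0 < Z := Finset.sum_pos (fun b _ => mul_pos (hpi0pos x b) (Real.exp_pos _))
    Finset.univ_nonempty
  have hZ'pos : 0 < Z' := Finset.sum_pos (fun b _ => mul_pos (hpi0pos x b) (Real.exp_pos _))
    Finset.univ_nonempty
  have hpθa : ∀ a, pθ x a = pi0 x a * Real.exp (f a / η) / Z := fun a => hpθ x a
  have hpθ'a : ∀ a, pθ' x a = pi0 x a * Real.exp (g a / η) / Z' := fun a => hpθ' x a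
  have hpθpos : ∀ a, 0 < pθ x a := fun a => by
    rw [hpθa]; exact div_pos (mul_pos (hpi0pos x a) (Real.exp_pos _)) hZpos
  have hpθ'pos : ∀ a, 0 < pθ' x a := fun a => by
    rw [hpθ'a]; exact div_pos (mul_pos (hpi0pos x a) (Real.exp_pos _)) hZ'pos
  have hsumθ : ∑ a, pθ x a = 1 := by
    simp only [hpθa]
    rw [← Finset.sum_div, div_self hZpos.ne']
  have hsumθ' : ∑ a, pθ' x a = 1 := by
    simp only [hpθ'a]
    rw [← Finset.sum_div, div_self hZ'pos.ne']
  set C : ℝ := Real.log Z' - Real.log Z with hC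
  -- log of the ratio
  have hlog : ∀ a, Real.log (pθ x a / pθ' x a) = f a / η - g a / η + C := by
    intro a
    have h1 : pθ x a / pθ' x a
        = Real.exp (f a / η) / Real.exp (g a / η) * (Z' / Z) := by
      rw [hpθa, hpθ'a, div_div_div_comm, mul_div_mul_left _ _ (hpi0pos x a).ne',
        div_div_eq_mul_div, mul_div_assoc]
    rw [h1, Real.log_mul (by positivity) (by positivity),
      Real.log_div (Real.exp_ne_zero _) (Real.exp_ne_zero _),
      Real.log_div hZ'pos.ne' hZpos.ne', Real.log_exp, Real.log_exp]
  have hlog' : ∀ a, Real.log (pθ' x a / pθ x a) = -(f a / η - g a / η + C) := by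
    intro a
    rw [← hlog a, ← Real.log_inv, inv_div]
  -- KL expressions
  have hKL1 : KL (pθ x) (pθ' x) = (∑ a, pθ x a * (f a - g a)) / η + C := by
    unfold KL
    have hterm : ∀ a ∈ Finset.univ, pθ x a * Real.log (pθ x a / pθ' x a)
        = pθ x a * (f a - g a) / η + pθ x a * C := by
      intro a _
      rw [hlog a]
      field_simp
    rw [Finset.sum_congr rfl hterm, Finset.sum_add_distrib, ← Finset.sum_div,
      ← Finset.sum_mul, hsumθ, one_mul]
  have hKL2 : KL (pθ' x) (pθ x) = -((∑ a, pθ' x a * (f a - g a)) / η + C) := by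
    unfold KL
    have hterm : ∀ a ∈ Finset.univ, pθ' x a * Real.log (pθ' x a / pθ x a)
        = -(pθ' x a * (f a - g a) / η + pθ' x a * C) := by
      intro a _
      rw [hlog' a]
      field_simp
    rw [Finset.sum_congr rfl hterm, Finset.sum_neg_distrib, neg_inj,
      Finset.sum_add_distrib, ← Finset.sum_div, ← Finset.sum_mul, hsumθ', one_mul]
  have hKL2nonneg : 0 ≤ KL (pθ' x) (pθ x) :=
    KL_nonneg hpθ'pos hpθpos (by rw [hsumθ, hsumθ'])
  -- RHS equals the sum expression
  have hRHS : (θ - θ') ⬝ᵥ ((∑ a, pθ x a • φ x a) - (∑ a, pθ' x a • φ x a))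
      = ∑ a, (pθ x a - pθ' x a) * (f a - g a) := by
    simp only [dotProduct, Pi.sub_apply, Finset.sum_apply, Pi.smul_apply, smul_eq_mul,
      hf, hg]
    have step : ∀ i ∈ (Finset.univ : Finset (Fin d)),
        (θ i - θ' i) * (∑ a, pθ x a * φ x a i - ∑ a, pθ' x a * φ x a i)
        = ∑ a, (θ i - θ' i) * ((pθ x a - pθ' x a) * φ x a i) := by
      intro i _
      rw [← Finset.sum_sub_distrib, Finset.mul_sum]
      exact Finset.sum_congr rfl fun a _ => by ring
    rw [Finset.sum_congr rfl step, Finset.sum_comm]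
    refine Finset.sum_congr rfl fun a _ => ?_
    rw [← Finset.sum_sub_distrib, Finset.mul_sum]
    exact Finset.sum_congr rfl fun i _ => by ring
  -- combine
  have hsplit : ∑ a, (pθ x a - pθ' x a) * (f a - g a)
      = (∑ a, pθ x a * (f a - g a)) - ∑ a, pθ' x a * (f a - g a) := by
    rw [← Finset.sum_sub_distrib]
    exact Finset.sum_congr rfl fun a _ => by ring
  have key : η * KL (pθ x) (pθ' x) + η * KL (pθ' x) (pθ x)
      = ∑ a, (pθ x a - pθ' x a) * (f a - g a) := by
    rw [hKL1, hKL2, hsplit]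
    field_simp
    ring
  have hfin : η * KL (pθ x) (pθ' x)
      = ∑ a, (pθ x a - pθ' x a) * (f a - g a) - η * KL (pθ' x) (pθ x) := by
    linarith [key]
  rw [hfin, hRHS]
  nlinarith [mul_nonneg hη.le hKL2nonneg]
end

section
/- The elliptical potential is large only finitely often (Lemma 2.3): fix λ > 0 and vectors z_1, …, z_T ∈ ℝ^d with ‖z_t‖ ≤ 1 for all t, and define Z_t = λI + Σ_{s=1}^{t-1} z_s z_s^⊤. Then for any constant c > 0, the number of indices t ∈ {1,…,T} with ‖z_t‖_{Z_t^{-1}} > c is at most (3d / log(1+c²)) · log(1 + 1/(λ·log(1+c²))). -/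
open Finset Matrix

/-!
Let `S` be the set of rounds at which the potential exceeds `c` and
`V = λI + ∑_{s ∈ S} z_s z_sᵀ`. Adding the rank-one terms of `S` in time order, the matrix
determinant lemma multiplies the determinant by `1 + z_tᵀ V_t⁻¹ z_t`, where `V_t` is the partial
sum before `t`; since `V_t ≤ Z_t` in Loewner order, this factor exceeds `1 + c²`. Hence
`det V ≥ λ^d (1 + c²)^|S|`, while AM–GM on the eigenvalues gives
`det V ≤ (tr V / d)^d ≤ (λ + |S| / d)^d`. Taking logarithms, `x = |S| log(1 + c²) / d` satisfies
`x ≤ log (1 + a x)` with `a = 1 / (λ log(1 + c²))`, and an elementary estimate turns this into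
`x ≤ 3 log (1 + a)`.
-/

namespace Real

theorem prod_le_sum_div_card_pow {ι : Type*} (s : Finset ι) {f : ι → ℝ}
    (hf : ∀ i ∈ s, 0 ≤ f i) : ∏ i ∈ s, f i ≤ ((∑ i ∈ s, f i) / #s) ^ #s := by
  rcases s.eq_empty_or_nonempty with rfl | hs
  · simp
  have hcard : (#s : ℝ) ≠ 0 := by exact_mod_cast hs.card_pos.ne'
  have hgm := geom_mean_le_arith_mean_weighted s (fun _ => (#s : ℝ)⁻¹) f
    (fun _ _ => by positivity) (by simp [hcard]) hf
  rw [finsetProd_rpow s f hf, ← mul_sum, inv_mul_eq_div] at hgm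
  calc ∏ i ∈ s, f i = ((∏ i ∈ s, f i) ^ (#s : ℝ)⁻¹) ^ #s :=
        (rpow_inv_natCast_pow (prod_nonneg hf) hs.card_pos.ne').symm
    _ ≤ _ := pow_le_pow_left₀ (rpow_nonneg (prod_nonneg hf) _) hgm _

theorem le_three_mul_log_one_add {a x : ℝ} (ha : 0 < a) (h : x ≤ log (1 + a * x)) :
    x ≤ 3 * log (1 + a) := by
  have hlog : 0 < log (1 + a) := log_pos (by linarith)
  rcases le_or_gt x 0 with hx | hx
  · linarith
  rcases le_or_gt a 1 with ha1 | ha1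
  · have : log (1 + a * x) < x := by
      calc log (1 + a * x) ≤ log (1 + x) := log_le_log (by positivity) (by nlinarith)
        _ < x := by linarith [log_lt_sub_one_of_pos (x := 1 + x) (by positivity) (by linarith)]
    linarith
  · set l := log (1 + a)
    have hsplit : x ≤ l + log (1 + x) := by
      rw [← log_mul (by positivity) (by positivity)]
      exact h.trans (log_le_log (by positivity) (by nlinarith))
    -- The tangent `log y ≤ y / e` turns `hsplit` into `x ≤ (e l + 1) / (e - 1)`, which is at
    -- most `3 l` because `l > log 2`.
    have htangent : log (1 + x) * exp 1 ≤ 1 + x := by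
      have := log_le_sub_one_of_pos (x := (1 + x) / exp 1) (by positivity)
      rwa [log_div (by positivity) (exp_ne_zero 1), log_exp, sub_le_sub_iff_right,
        le_div_iff₀ (exp_pos 1)] at this
    have hl : 0.69 < l :=
      lt_trans (by norm_num) (log_two_gt_d9.trans (log_lt_log (by norm_num) (by linarith)))
    have he : 2.7 < exp 1 := lt_trans (by norm_num) exp_one_gt_d9
    have hx_e : x * (exp 1 - 1) ≤ l * exp 1 + 1 := by nlinarith
    nlinarith

theorem natCast_le_of_mul_pow_le_add_div_pow {d k : ℕ} {lam b : ℝ} (hlam : 0 < lam)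
    (hb : 1 < b) (h : lam ^ d * b ^ k ≤ ((lam * d + k) / d) ^ d) :
    (k : ℝ) ≤ 3 * d / log b * log (1 + 1 / (lam * log b)) := by
  have hL : 0 < log b := log_pos hb
  rcases Nat.eq_zero_or_pos d with rfl | hd
  · have : k = 0 := by
      by_contra hk
      simp only [pow_zero, one_mul] at h
      exact (one_lt_pow₀ hb hk).not_ge h
    simp [this]
  have hd' : (0 : ℝ) < d := by exact_mod_cast hd
  have hfactor : (lam * d + k) / d = lam * (1 + k / (lam * d)) := by field_simp
  rw [hfactor, mul_pow, mul_le_mul_iff_right₀ (by positivity)] at h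
  have hlog : k * log b ≤ d * log (1 + k / (lam * d)) := by
    simpa only [log_pow] using log_le_log (by positivity) h
  have hax : 1 / (lam * log b) * (k * log b / d) = k / (lam * d) := by field_simp
  have hx := le_three_mul_log_one_add (a := 1 / (lam * log b)) (x := k * log b / d)
    (by positivity) (by rw [hax, div_le_iff₀ hd']; linarith)
  rw [div_le_iff₀ hd'] at hx
  rw [div_mul_eq_mul_div, le_div_iff₀ hL]
  linarith

end Real

namespace Matrix

variable {n : Type*} [Fintype n]

theorem posSemidef_vecMulVec_self (v : n → ℝ) : (vecMulVec v v).PosSemidef := by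
  simpa using posSemidef_vecMulVec_self_star v

theorem IsHermitian.dotProduct_mulVec_comm {A : Matrix n n ℝ} (hA : A.IsHermitian)
    (x y : n → ℝ) : x ⬝ᵥ A *ᵥ y = y ⬝ᵥ A *ᵥ x := by
  rw [dotProduct_mulVec, ← mulVec_transpose, dotProduct_comm]
  simpa using congrArg (fun M => y ⬝ᵥ M *ᵥ x) hA.eq

theorem PosDef.add_sum_vecMulVec {ι : Type*} {A : Matrix n n ℝ} (hA : A.PosDef)
    (z : ι → n → ℝ) (S : Finset ι) : (A + ∑ s ∈ S, vecMulVec (z s) (z s)).PosDef :=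
  hA.add_posSemidef (posSemidef_sum S fun s _ => posSemidef_vecMulVec_self (z s))

variable [DecidableEq n]

theorem det_add_vecMulVec {R : Type*} [CommRing R] {A : Matrix n n R} (hA : IsUnit A.det)
    (u v : n → R) : (A + vecMulVec u v).det = A.det * (1 + v ⬝ᵥ A⁻¹ *ᵥ u) := by
  rw [vecMulVec_eq Unit, det_add_replicateCol_mul_replicateRow hA, det_unique (n := Unit),
    Matrix.mul_assoc, ← replicateCol_mulVec]
  simp [replicateRow_mul_replicateCol_apply]

theorem PosSemidef.det_le_trace_div_card_pow {A : Matrix n n ℝ} (hA : A.PosSemidef) :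
    A.det ≤ (A.trace / Fintype.card n) ^ Fintype.card n := by
  rw [hA.isHermitian.det_eq_prod_eigenvalues, hA.isHermitian.trace_eq_sum_eigenvalues]
  simpa using Real.prod_le_sum_div_card_pow univ fun i _ => hA.eigenvalues_nonneg i

section RankOneSums

variable {ι : Type*} {A B : Matrix n n ℝ}

theorem PosDef.two_mul_dotProduct_sub_le (hA : A.PosDef) (x v : n → ℝ) :
    2 * (x ⬝ᵥ v) - x ⬝ᵥ A *ᵥ x ≤ v ⬝ᵥ A⁻¹ *ᵥ v := by
  set u := A⁻¹ *ᵥ v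
  have hAu : A *ᵥ u = v := by
    rw [mulVec_mulVec, mul_nonsing_inv _ hA.det_pos.ne'.isUnit, one_mulVec]
  have hsq : 0 ≤ (x - u) ⬝ᵥ A *ᵥ (x - u) := by
    simpa using hA.posSemidef.dotProduct_mulVec_nonneg (x - u)
  rw [mulVec_sub, sub_dotProduct, dotProduct_sub, dotProduct_sub, hAu,
    hA.isHermitian.dotProduct_mulVec_comm u x, hAu, dotProduct_comm u v] at hsq
  linarith

theorem PosDef.dotProduct_inv_mulVec_anti (hA : A.PosDef) (hAB : (B - A).PosSemidef)
    (v : n → ℝ) : v ⬝ᵥ B⁻¹ *ᵥ v ≤ v ⬝ᵥ A⁻¹ *ᵥ v := by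
  have hB : B.PosDef := by simpa using hA.add_posSemidef hAB
  set x := B⁻¹ *ᵥ v
  have hBx : B *ᵥ x = v := by
    rw [mulVec_mulVec, mul_nonsing_inv _ hB.det_pos.ne'.isUnit, one_mulVec]
  have hAx : x ⬝ᵥ A *ᵥ x ≤ x ⬝ᵥ B *ᵥ x := by
    have := hAB.dotProduct_mulVec_nonneg x
    simp only [star_trivial, sub_mulVec, dotProduct_sub] at this
    linarith
  have hfenchel := hA.two_mul_dotProduct_sub_le x v
  rw [hBx, dotProduct_comm x v] at hAx
  rw [dotProduct_comm x v] at hfenchel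
  linarith

theorem PosDef.dotProduct_inv_add_sum_vecMulVec_anti (hA : A.PosDef) (z : ι → n → ℝ)
    {S T : Finset ι} (hST : S ⊆ T) (v : n → ℝ) :
    v ⬝ᵥ (A + ∑ s ∈ T, vecMulVec (z s) (z s))⁻¹ *ᵥ v
      ≤ v ⬝ᵥ (A + ∑ s ∈ S, vecMulVec (z s) (z s))⁻¹ *ᵥ v := by
  classical
  refine (hA.add_sum_vecMulVec z S).dotProduct_inv_mulVec_anti ?_ v
  rw [add_sub_add_left_eq_sub, ← sum_sdiff_eq_sub hST]
  exact posSemidef_sum _ fun s _ => posSemidef_vecMulVec_self (z s)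

theorem PosDef.det_add_sum_vecMulVec [LinearOrder ι] (hA : A.PosDef) (z : ι → n → ℝ)
    (S : Finset ι) :
    (A + ∑ s ∈ S, vecMulVec (z s) (z s)).det = A.det *
      ∏ t ∈ S, (1 + z t ⬝ᵥ (A + ∑ s ∈ S with s < t, vecMulVec (z s) (z s))⁻¹ *ᵥ z t) := by
  induction S using Finset.induction_on_max with
  | empty => simp
  | insert a S hlt ih =>
    have ha : a ∉ S := fun h => lt_irrefl a (hlt a h)
    have hbelow_a : {s ∈ insert a S | s < a} = S := by
      rw [filter_insert, if_neg (lt_irrefl a), filter_true_of_mem hlt]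
    have hprod : ∏ t ∈ S, (1 + z t ⬝ᵥ
          (A + ∑ s ∈ insert a S with s < t, vecMulVec (z s) (z s))⁻¹ *ᵥ z t)
        = ∏ t ∈ S, (1 + z t ⬝ᵥ (A + ∑ s ∈ S with s < t, vecMulVec (z s) (z s))⁻¹ *ᵥ z t) :=
      prod_congr rfl fun t ht => by rw [filter_insert, if_neg (hlt t ht).not_gt]
    rw [sum_insert ha, add_left_comm, add_comm,
      det_add_vecMulVec (hA.add_sum_vecMulVec z S).det_pos.ne'.isUnit, ih, prod_insert ha,
      hbelow_a, hprod]
    ring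

end RankOneSums

end Matrix

theorem elliptical_potential_is_usually_small
    {d : ℕ} (T : ℕ) (lam : ℝ) (hlam : 0 < lam)
    (z : Fin T → Fin d → ℝ)
    (hz : ∀ t, Real.sqrt (z t ⬝ᵥ z t) ≤ 1)
    (Z : Fin T → Matrix (Fin d) (Fin d) ℝ)
    (hZ : ∀ t, Z t = lam • (1 : Matrix (Fin d) (Fin d) ℝ) +
      ∑ s ∈ Finset.univ.filter (fun s : Fin T => s < t), vecMulVec (z s) (z s))
    (c : ℝ) (hc : 0 < c) :
    ((Finset.univ.filter (fun t : Fin T => c < matNorm (Z t)⁻¹ (z t))).card : ℝ)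
      ≤ (3 * d / Real.log (1 + c ^ 2)) *
          Real.log (1 + 1 / (lam * Real.log (1 + c ^ 2))) := by
  set S := univ.filter (fun t : Fin T => c < matNorm (Z t)⁻¹ (z t))
  set A : Matrix (Fin d) (Fin d) ℝ := lam • 1
  have hA : A.PosDef := PosDef.one.smul hlam
  set V := A + ∑ s ∈ S, vecMulVec (z s) (z s)
  have hV : V.PosSemidef := (hA.add_sum_vecMulVec z S).posSemidef
  have hpotential : ∀ t ∈ S,
      c ^ 2 ≤ z t ⬝ᵥ (A + ∑ s ∈ S with s < t, vecMulVec (z s) (z s))⁻¹ *ᵥ z t := by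
    intro t ht
    have hct : c ^ 2 < z t ⬝ᵥ (Z t)⁻¹ *ᵥ z t :=
      (Real.lt_sqrt hc.le).mp (mem_filter.mp ht).2
    rw [hZ t] at hct
    exact hct.le.trans (hA.dotProduct_inv_add_sum_vecMulVec_anti z
      (filter_subset_filter _ (subset_univ S)) _)
  have hdet : lam ^ d * (1 + c ^ 2) ^ #S ≤ V.det := by
    rw [hA.det_add_sum_vecMulVec, det_smul, det_one, mul_one, Fintype.card_fin, ← prod_const]
    gcongr with t ht
    linarith [hpotential t ht]
  have htrace : V.trace ≤ lam * d + #S := by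
    simp only [V, A, trace_add, trace_smul, trace_one, trace_sum, trace_vecMulVec,
      Fintype.card_fin, smul_eq_mul]
    gcongr
    simpa using sum_le_sum fun s (_ : s ∈ S) => Real.sqrt_le_one.mp (hz s)
  refine Real.natCast_le_of_mul_pow_le_add_div_pow hlam
    (lt_add_of_pos_right 1 (pow_pos hc 2)) ?_
  calc lam ^ d * (1 + c ^ 2) ^ #S ≤ V.det := hdet
    _ ≤ (V.trace / d) ^ d := by
      simpa only [Fintype.card_fin] using hV.det_le_trace_div_card_pow
    _ ≤ ((lam * d + #S) / d) ^ d := by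
      gcongr
      exact div_nonneg hV.trace_nonneg d.cast_nonneg
end

section
/- Single-policy coverage implies small inverse-covariance norm (core of Proposition C.1): let v ∈ ℝ^d with ‖v‖ ≤ B for some B > 0, let c > 0 and n > 0, and let Σ ∈ ℝ^{d×d} be a symmetric matrix satisfying Σ ⪰ B²·I + c·n·v v^⊤ in the positive semidefinite (Loewner) order. Then Σ is positive definite and ‖v‖_{Σ^{-1}} ≤ √(d/(c·n)). -/
/-!
Since `B² I + c n v vᵀ` is positive definite, so is `Σ`. Dropping the `B² I` term leaves
`Σ ⪰ c n v vᵀ`, and testing this against `x = Σ⁻¹ v` gives `t ≥ c n t²` for `t = vᵀ Σ⁻¹ v`,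
hence `t ≤ 1 / (c n) ≤ d / (c n)`.
-/

open Finset Matrix

namespace Matrix

variable {ι : Type*} [Fintype ι] [DecidableEq ι]

theorem dotProduct_inv_mulVec_le_of_posSemidef_sub {S : Matrix ι ι ℝ} (hS : IsUnit S)
    {k : ℝ} (hk : 0 < k) (v : ι → ℝ) (h : (S - k • vecMulVec v v).PosSemidef) :
    v ⬝ᵥ S⁻¹ *ᵥ v ≤ k⁻¹ := by
  set x := S⁻¹ *ᵥ v
  set t := v ⬝ᵥ x
  have hSx : S *ᵥ x = v := by
    rw [mulVec_mulVec, mul_nonsing_inv _ ((isUnit_iff_isUnit_det S).mp hS), one_mulVec]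
  have hquad : k * t ^ 2 ≤ t := by
    have := h.dotProduct_mulVec_nonneg x
    rw [star_trivial, sub_mulVec, hSx, smul_mulVec, vecMulVec_mulVec, op_smul_eq_smul,
      dotProduct_sub, dotProduct_smul, dotProduct_smul, dotProduct_comm x v, smul_eq_mul,
      smul_eq_mul] at this
    linarith
  rw [← mul_one k⁻¹, le_inv_mul_iff₀ hk]
  nlinarith

end Matrix

theorem coverage_implies_small_inverse_norm_general
    {d : ℕ} (v : Fin d → ℝ) (B : ℝ) (hB : 0 < B)
    (c n : ℝ) (hc : 0 < c) (hn : 0 < n)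
    (Sig : Matrix (Fin d) (Fin d) ℝ)
    (hLoewner : (Sig - (B ^ 2 • (1 : Matrix (Fin d) (Fin d) ℝ)
      + (c * n) • vecMulVec v v)).PosSemidef) :
    Sig.PosDef ∧ matNorm Sig⁻¹ v ≤ Real.sqrt (d / (c * n)) := by
  have hcn : 0 < c * n := mul_pos hc hn
  have hvv : ((c * n) • vecMulVec v v).PosSemidef := by
    simpa using (posSemidef_vecMulVec_self_star v).smul hcn.le
  have hSig : Sig.PosDef := by
    have hA := (PosDef.one.smul (pow_pos hB 2)).add_posSemidef hvv
    simpa using PosDef.posSemidef_add hLoewner hA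
  have hrankOne : (Sig - (c * n) • vecMulVec v v).PosSemidef := by
    convert hLoewner.add (PosSemidef.one.smul (sq_nonneg B)) using 1
    abel
  refine ⟨hSig, Real.sqrt_le_sqrt ?_⟩
  rcases Nat.eq_zero_or_pos d with rfl | hd
  · simp [dotProduct]
  calc v ⬝ᵥ Sig⁻¹ *ᵥ v ≤ (c * n)⁻¹ :=
        dotProduct_inv_mulVec_le_of_posSemidef_sub hSig.isUnit hcn v hrankOne
    _ ≤ d / (c * n) := by
        rw [inv_eq_one_div]
        gcongr
        exact_mod_cast hd

theorem coverage_implies_small_inverse_norm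
    {d : ℕ} (v : Fin d → ℝ) (B : ℝ) (hB : 0 < B)
    (hv : Real.sqrt (v ⬝ᵥ v) ≤ B)
    (c n : ℝ) (hc : 0 < c) (hn : 0 < n)
    (Sig : Matrix (Fin d) (Fin d) ℝ) (hsym : Sig.IsSymm)
    (hLoewner : (Sig - (B ^ 2 • (1 : Matrix (Fin d) (Fin d) ℝ)
      + (c * n) • vecMulVec v v)).PosSemidef) :
    Sig.PosDef ∧ matNorm Sig⁻¹ v ≤ Real.sqrt (d / (c * n)) :=
  coverage_implies_small_inverse_norm_general v B hB c n hc hn Sig hLoewner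
end

section
/- Characterization of population DPO minimizers under partial coverage (Appendix E): fix η > 0, a finite action set A, a subset S* ⊆ A, and probability distributions π0, π*, π_off on A such that π0 and π* have support exactly S* and supp(π_off) ⊆ S*. For distributions π_θ on A with support S*, define p^θ(a¹,a²) = σ( η·log(π_θ(a¹)/π0(a¹)) − η·log(π_θ(a²)/π0(a²)) ) and p*(a¹,a²) analogously with π*, and the population loss L_∞(π_θ) = −E_{a¹,a² ∼ π_off ⊗ π_off}[ p*(a¹,a²)·log p^θ(a¹,a²) + p*(a²,a¹)·log p^θ(a²,a¹) ]. If π_θ minimizes L_∞ over all distributions with support S*, then there exists a constant C > 0 such that π_θ(a) = C·π*(a) for all a ∈ supp(π_off); in particular, if supp(π_off) = S*, then π_θ = π*. -/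
open Finset

/-- The sigmoid function σ(z) = 1 / (1 + exp(−z)). -/
noncomputable def sigmoid (z : ℝ) : ℝ := 1 / (1 + Real.exp (-z))

/-- The implicit preference probability of policy `q` (against reference `pi0`,
with KL coefficient `η`) that response `a1` is preferred to `a2`. -/
noncomputable def prefProb {A : Type*} (η : ℝ) (pi0 q : A → ℝ) (a1 a2 : A) : ℝ :=
  sigmoid (η * Real.log (q a1 / pi0 a1) - η * Real.log (q a2 / pi0 a2))

/-!
Writing `p_q(a¹, a²)` for the preference probability induced by `q`, and using
`p_q(a², a¹) = 1 - p_q(a¹, a²)`, the population loss is the `π_off ⊗ π_off`-average of the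
binary cross-entropies `H(p_{π*}(a¹, a²), p_q(a¹, a²))`. By Gibbs' inequality each of them is
at least the binary entropy `H(p_{π*}(a¹, a²))`, with equality only when
`p_q(a¹, a²) = p_{π*}(a¹, a²)`. Hence `π*` is a minimizer, and any other minimizer induces the
same preference probabilities on `supp π_off`. Since σ is injective and `η ≠ 0`, this says that
`log (π_θ / π*)` is constant on `supp π_off`.
-/

open Real hiding sigmoid

lemma sigmoid_eq_real_sigmoid (z : ℝ) : sigmoid z = Real.sigmoid z := by
  rw [sigmoid, Real.sigmoid_def, one_div]

lemma prefProb_pos {A : Type*} (η : ℝ) (pi0 q : A → ℝ) (a1 a2 : A) :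
    0 < prefProb η pi0 q a1 a2 := by
  rw [prefProb, sigmoid_eq_real_sigmoid]
  exact Real.sigmoid_pos _

lemma prefProb_lt_one {A : Type*} (η : ℝ) (pi0 q : A → ℝ) (a1 a2 : A) :
    prefProb η pi0 q a1 a2 < 1 := by
  rw [prefProb, sigmoid_eq_real_sigmoid]
  exact Real.sigmoid_lt_one _

lemma prefProb_swap {A : Type*} (η : ℝ) (pi0 q : A → ℝ) (a1 a2 : A) :
    prefProb η pi0 q a2 a1 = 1 - prefProb η pi0 q a1 a2 := by
  simp only [prefProb, sigmoid_eq_real_sigmoid, ← Real.sigmoid_neg, neg_sub]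

lemma mul_eq_mul_of_prefProb_eq {A : Type*} {η : ℝ} (hη : η ≠ 0) {pi0 q r : A → ℝ}
    {a1 a2 : A}
    (hpi1 : 0 < pi0 a1) (hpi2 : 0 < pi0 a2) (hq1 : 0 < q a1) (hq2 : 0 < q a2)
    (hr1 : 0 < r a1) (hr2 : 0 < r a2) (h : prefProb η pi0 q a1 a2 = prefProb η pi0 r a1 a2) :
    q a1 * r a2 = q a2 * r a1 := by
  simp only [prefProb, sigmoid_eq_real_sigmoid, Real.sigmoid_inj] at h
  rw [← mul_sub, ← mul_sub, mul_right_inj' hη, log_div hq1.ne' hpi1.ne',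
    log_div hq2.ne' hpi2.ne', log_div hr1.ne' hpi1.ne', log_div hr2.ne' hpi2.ne'] at h
  refine log_injOn_pos (mul_pos hq1 hr2) (mul_pos hq2 hr1) ?_
  rw [log_mul hq1.ne' hr2.ne', log_mul hq2.ne' hr1.ne']
  linarith

lemma mul_log_div_le_sub {p q : ℝ} (hp : 0 < p) (hq : 0 < q) : p * log (q / p) ≤ q - p := by
  have h := mul_le_mul_of_nonneg_left (log_le_sub_one_of_pos (div_pos hq hp)) hp.le
  rwa [mul_sub, mul_div_cancel₀ _ hp.ne', mul_one] at h

lemma mul_log_div_lt_sub {p q : ℝ} (hp : 0 < p) (hq : 0 < q) (hqp : q ≠ p) :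
    p * log (q / p) < q - p := by
  have hne : q / p ≠ 1 := by rwa [ne_eq, div_eq_one_iff_eq hp.ne']
  have h := mul_lt_mul_of_pos_left (log_lt_sub_one_of_pos (div_pos hq hp) hne) hp
  rwa [mul_sub, mul_div_cancel₀ _ hp.ne', mul_one] at h

/-- Written with `log q⁻¹` like `Real.binEntropy`, so that `binCrossEntropy p p` is
`binEntropy p` by definition. -/
noncomputable def binCrossEntropy (p q : ℝ) : ℝ := p * log q⁻¹ + (1 - p) * log (1 - q)⁻¹

lemma binEntropy_lt_binCrossEntropy {p q : ℝ} (hp0 : 0 < p) (hp1 : p < 1) (hq0 : 0 < q)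
    (hq1 : q < 1) (hqp : q ≠ p) : binEntropy p < binCrossEntropy p q := by
  have h₁ := mul_log_div_lt_sub hp0 hq0 hqp
  have h₂ := mul_log_div_le_sub (sub_pos.2 hp1) (sub_pos.2 hq1)
  rw [log_div hq0.ne' hp0.ne'] at h₁
  rw [log_div (sub_pos.2 hq1).ne' (sub_pos.2 hp1).ne'] at h₂
  simp only [binEntropy, binCrossEntropy, log_inv]
  linarith

lemma binEntropy_le_binCrossEntropy {p q : ℝ} (hp0 : 0 < p) (hp1 : p < 1) (hq0 : 0 < q)
    (hq1 : q < 1) : binEntropy p ≤ binCrossEntropy p q := by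
  rcases eq_or_ne q p with rfl | hqp
  · rfl
  · exact (binEntropy_lt_binCrossEntropy hp0 hp1 hq0 hq1 hqp).le

lemma eq_of_binCrossEntropy_le_binEntropy {p q : ℝ} (hp0 : 0 < p) (hp1 : p < 1) (hq0 : 0 < q)
    (hq1 : q < 1) (h : binCrossEntropy p q ≤ binEntropy p) : q = p := by
  by_contra hqp
  exact h.not_gt (binEntropy_lt_binCrossEntropy hp0 hp1 hq0 hq1 hqp)

section DPOLoss

variable {A : Type*} [Fintype A] (η : ℝ) (pi0 pistar pioff : A → ℝ)

noncomputable def dpoLoss (q : A → ℝ) : ℝ :=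
  ∑ x : A × A, pioff x.1 * pioff x.2 *
    binCrossEntropy (prefProb η pi0 pistar x.1 x.2) (prefProb η pi0 q x.1 x.2)

lemma neg_sum_prefProb_mul_log_eq_dpoLoss (q : A → ℝ) :
    - ∑ a1, ∑ a2, pioff a1 * pioff a2 *
        (prefProb η pi0 pistar a1 a2 * log (prefProb η pi0 q a1 a2)
          + prefProb η pi0 pistar a2 a1 * log (prefProb η pi0 q a2 a1))
      = dpoLoss η pi0 pistar pioff q := by
  rw [dpoLoss, Fintype.sum_prod_type, ← sum_neg_distrib]
  refine sum_congr rfl fun a1 _ => ?_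
  rw [← sum_neg_distrib]
  refine sum_congr rfl fun a2 _ => ?_
  rw [binCrossEntropy, prefProb_swap η pi0 pistar a1 a2, prefProb_swap η pi0 q a1 a2, log_inv,
    log_inv]
  ring

variable {η pi0 pistar pioff}

lemma prefProb_eq_of_dpoLoss_le (hpioff : ∀ a, 0 ≤ pioff a) {q : A → ℝ}
    (h : dpoLoss η pi0 pistar pioff q ≤ dpoLoss η pi0 pistar pioff pistar) {a1 a2 : A}
    (ha1 : pioff a1 ≠ 0) (ha2 : pioff a2 ≠ 0) :
    prefProb η pi0 q a1 a2 = prefProb η pi0 pistar a1 a2 := by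
  have hterm : ∀ x ∈ (univ : Finset (A × A)),
      pioff x.1 * pioff x.2 * binEntropy (prefProb η pi0 pistar x.1 x.2)
        ≤ pioff x.1 * pioff x.2 *
          binCrossEntropy (prefProb η pi0 pistar x.1 x.2) (prefProb η pi0 q x.1 x.2) :=
    fun x _ => mul_le_mul_of_nonneg_left
      (binEntropy_le_binCrossEntropy (prefProb_pos ..) (prefProb_lt_one ..)
        (prefProb_pos ..) (prefProb_lt_one ..))
      (mul_nonneg (hpioff _) (hpioff _))
  have hsum : dpoLoss η pi0 pistar pioff pistar = dpoLoss η pi0 pistar pioff q :=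
    le_antisymm (sum_le_sum hterm) h
  have hpair := (sum_eq_sum_iff_of_le hterm).1 hsum (a1, a2) (mem_univ _)
  rw [mul_right_inj' (mul_ne_zero ha1 ha2)] at hpair
  exact eq_of_binCrossEntropy_le_binEntropy (prefProb_pos ..) (prefProb_lt_one ..)
    (prefProb_pos ..) (prefProb_lt_one ..) hpair.ge

end DPOLoss

lemma exists_pos_forall_eq_const_mul {A : Type*} {P : A → Prop} {q r : A → ℝ} {a0 : A}
    (ha0 : P a0) (hq : 0 < q a0) (hr : 0 < r a0)
    (h : ∀ a b, P a → P b → q a * r b = q b * r a) :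
    ∃ C, 0 < C ∧ ∀ a, P a → q a = C * r a := by
  refine ⟨q a0 / r a0, div_pos hq hr, fun a ha => ?_⟩
  rw [div_mul_eq_mul_div, eq_div_iff hr.ne', h a a0 ha ha0]

lemma eq_of_forall_eq_const_mul {A : Type*} [Fintype A] {q r : A → ℝ} {C : ℝ}
    (h : ∀ a, q a = C * r a) (hq : ∑ a, q a = 1) (hr : ∑ a, r a = 1) : q = r := by
  have hC : C = 1 := by
    rw [sum_congr rfl fun a _ => h a, ← mul_sum, hr, mul_one] at hq
    exact hq
  funext a
  rw [h a, hC, one_mul]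

theorem dpo_population_minimizer_characterization_general
    {A : Type*} [Fintype A]
    (η : ℝ) (hη : 0 < η)
    (S : Finset A)
    (pi0 pistar pioff pith : A → ℝ)
    (hpi0 : ∀ a, 0 ≤ pi0 a)
    (hpi0supp : ∀ a, pi0 a ≠ 0 ↔ a ∈ S)
    (hpistar : ∀ a, 0 ≤ pistar a) (hpistarsum : ∑ a, pistar a = 1)
    (hpistarsupp : ∀ a, pistar a ≠ 0 ↔ a ∈ S)
    (hpioff : ∀ a, 0 ≤ pioff a) (hpioffsum : ∑ a, pioff a = 1)
    (hpioffsupp : ∀ a, pioff a ≠ 0 → a ∈ S)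
    (hpith : ∀ a, 0 ≤ pith a) (hpithsum : ∑ a, pith a = 1)
    (hpithsupp : ∀ a, pith a ≠ 0 ↔ a ∈ S)
    (Linf : (A → ℝ) → ℝ)
    (hLinf : ∀ q : A → ℝ, Linf q =
      - ∑ a1, ∑ a2, pioff a1 * pioff a2 *
          (prefProb η pi0 pistar a1 a2 * Real.log (prefProb η pi0 q a1 a2)
            + prefProb η pi0 pistar a2 a1 * Real.log (prefProb η pi0 q a2 a1)))
    (hmin : ∀ q : A → ℝ,
      ((∀ a, 0 ≤ q a) ∧ (∑ a, q a = 1) ∧ (∀ a, q a ≠ 0 ↔ a ∈ S)) →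
        Linf pith ≤ Linf q) :
    (∃ C : ℝ, 0 < C ∧ ∀ a, pioff a ≠ 0 → pith a = C * pistar a)
    ∧ ((∀ a, pioff a ≠ 0 ↔ a ∈ S) → pith = pistar) := by
  have hopt : dpoLoss η pi0 pistar pioff pith ≤ dpoLoss η pi0 pistar pioff pistar := by
    simpa only [hLinf, neg_sum_prefProb_mul_log_eq_dpoLoss] using
      hmin pistar ⟨hpistar, hpistarsum, hpistarsupp⟩
  have hpos : ∀ f : A → ℝ, (∀ a, 0 ≤ f a) → (∀ a, f a ≠ 0 ↔ a ∈ S) →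
      ∀ a, pioff a ≠ 0 → 0 < f a :=
    fun f hf hfsupp a ha => (hf a).lt_of_ne' ((hfsupp a).2 (hpioffsupp a ha))
  have hcross : ∀ a b, pioff a ≠ 0 → pioff b ≠ 0 →
      pith a * pistar b = pith b * pistar a :=
    fun a b ha hb => mul_eq_mul_of_prefProb_eq hη.ne'
      (hpos _ hpi0 hpi0supp a ha) (hpos _ hpi0 hpi0supp b hb)
      (hpos _ hpith hpithsupp a ha) (hpos _ hpith hpithsupp b hb)
      (hpos _ hpistar hpistarsupp a ha) (hpos _ hpistar hpistarsupp b hb)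
      (prefProb_eq_of_dpoLoss_le hpioff hopt ha hb)
  obtain ⟨a0, -, ha0⟩ := exists_ne_zero_of_sum_ne_zero (by rw [hpioffsum]; exact one_ne_zero)
  obtain ⟨C, hC, hprop⟩ := exists_pos_forall_eq_const_mul (P := (pioff · ≠ 0)) ha0
    (hpos _ hpith hpithsupp a0 ha0) (hpos _ hpistar hpistarsupp a0 ha0) hcross
  refine ⟨⟨C, hC, hprop⟩, fun hfull =>
    eq_of_forall_eq_const_mul (C := C) (fun a => ?_) hpithsum hpistarsum⟩
  by_cases ha : a ∈ S
  · exact hprop a ((hfull a).2 ha)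
  · rw [not_ne_iff.1 (mt (hpithsupp a).1 ha), not_ne_iff.1 (mt (hpistarsupp a).1 ha), mul_zero]

theorem dpo_population_minimizer_characterization
    {A : Type*} [Fintype A]
    (η : ℝ) (hη : 0 < η)
    (S : Finset A)
    (pi0 pistar pioff pith : A → ℝ)
    (hpi0 : ∀ a, 0 ≤ pi0 a) (hpi0sum : ∑ a, pi0 a = 1)
    (hpi0supp : ∀ a, pi0 a ≠ 0 ↔ a ∈ S)
    (hpistar : ∀ a, 0 ≤ pistar a) (hpistarsum : ∑ a, pistar a = 1)
    (hpistarsupp : ∀ a, pistar a ≠ 0 ↔ a ∈ S)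
    (hpioff : ∀ a, 0 ≤ pioff a) (hpioffsum : ∑ a, pioff a = 1)
    (hpioffsupp : ∀ a, pioff a ≠ 0 → a ∈ S)
    (hpith : ∀ a, 0 ≤ pith a) (hpithsum : ∑ a, pith a = 1)
    (hpithsupp : ∀ a, pith a ≠ 0 ↔ a ∈ S)
    (Linf : (A → ℝ) → ℝ)
    (hLinf : ∀ q : A → ℝ, Linf q =
      - ∑ a1, ∑ a2, pioff a1 * pioff a2 *
          (prefProb η pi0 pistar a1 a2 * Real.log (prefProb η pi0 q a1 a2)
            + prefProb η pi0 pistar a2 a1 * Real.log (prefProb η pi0 q a2 a1)))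
    (hmin : ∀ q : A → ℝ,
      ((∀ a, 0 ≤ q a) ∧ (∑ a, q a = 1) ∧ (∀ a, q a ≠ 0 ↔ a ∈ S)) →
        Linf pith ≤ Linf q) :
    (∃ C : ℝ, 0 < C ∧ ∀ a, pioff a ≠ 0 → pith a = C * pistar a)
    ∧ ((∀ a, pioff a ≠ 0 ↔ a ∈ S) → pith = pistar) :=
  dpo_population_minimizer_characterization_general η hη S pi0 pistar pioff pith hpi0 hpi0supp
    hpistar hpistarsum hpistarsupp hpioff hpioffsum hpioffsupp hpith hpithsum hpithsupp Linf hLinf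
    hmin
end
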